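/- If i ≥ 1 is odd then the polynomial B_i(x) has degree (2^{ik} - 2^k)/(2^{2k} - 1), and if i ≥ 2 is even then B_i(x) has degree (2^{ik} - 2^{2k})/(2^{2k} - 1). -/

import Mathlib

/-!
Over any field, every `B_i` is monic and the second summand of the recurrence strictly dominates
the first: `deg B_{i+1} < 2^{ik}`. Hence `deg B_{i+2} = 2^{ik} + deg B_i`, and summing this
geometric progression over indices of one parity from `deg B_1 = deg B_2 = 0` gives the formulas.
-/

open Polynomial

/-- The polynomials `B_i` from the paper, as actual polynomials:
`B_1 = B_2 = 1`, `B_{i+2} = B_{i+1} + X^{2^{ik}} B_i`. -/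
noncomputable def Bpoly (F : Type*) [Field F] (k : ℕ) : ℕ → Polynomial F
  | 0 => 1
  | 1 => 1
  | 2 => 1
  | i + 3 => Bpoly F k (i + 2) + X ^ (2 ^ ((i + 1) * k)) * Bpoly F k (i + 1)

def bpolyDegree (k : ℕ) : ℕ → ℕ
  | 0 => 0
  | 1 => 0
  | 2 => 0
  | i + 3 => 2 ^ ((i + 1) * k) + bpolyDegree k (i + 1)

theorem bpolyDegree_succ_lt {k : ℕ} (hk : 1 ≤ k) : ∀ i, bpolyDegree k (i + 1) < 2 ^ (i * k)
  | 0 => by simp [bpolyDegree]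
  | 1 => by simp [bpolyDegree]
  | i + 2 => by
    have ih := bpolyDegree_succ_lt hk i
    have hle : 2 ^ (i * k) ≤ 2 ^ ((i + 1) * k) := Nat.pow_le_pow_right two_pos (by nlinarith)
    have hdouble : 2 * 2 ^ ((i + 1) * k) ≤ 2 ^ ((i + 2) * k) := by
      rw [← pow_succ']
      exact Nat.pow_le_pow_right two_pos (by nlinarith)
    show 2 ^ ((i + 1) * k) + bpolyDegree k (i + 1) < _
    omega

theorem bpolyDegree_add_two {k i : ℕ} (hi : 1 ≤ i) :
    bpolyDegree k (i + 2) = 2 ^ (i * k) + bpolyDegree k i := by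
  obtain ⟨j, rfl⟩ : ∃ j, i = j + 1 := ⟨i - 1, by omega⟩
  rfl

theorem bpolyDegree_add_two_mul (k : ℕ) {i : ℕ} (hi : 1 ≤ i) : ∀ m,
    bpolyDegree k (i + 2 * m) * (2 ^ (2 * k) - 1) + 2 ^ (i * k) =
      2 ^ ((i + 2 * m) * k) + bpolyDegree k i * (2 ^ (2 * k) - 1)
  | 0 => add_comm _ _
  | m + 1 => by
    have ih := bpolyDegree_add_two_mul k hi m
    have hpow : 2 ^ ((i + 2 * m + 2) * k) = 2 ^ ((i + 2 * m) * k) * 2 ^ (2 * k) := by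
      rw [← pow_add]
      ring_nf
    obtain ⟨r, hr⟩ : ∃ r, 2 ^ (2 * k) = r + 1 := ⟨_, (Nat.sub_add_cancel Nat.one_le_two_pow).symm⟩
    rw [mul_add_one, ← add_assoc, bpolyDegree_add_two (by omega), hpow]
    rw [hr, Nat.add_sub_cancel] at ih ⊢
    linarith

section

variable {F : Type*} [Field F] {k : ℕ}

theorem monic_Bpoly_and_natDegree_eq (hk : 1 ≤ k) :
    ∀ i, (Bpoly F k i).Monic ∧ (Bpoly F k i).natDegree = bpolyDegree k i
  | 0 => by simp [Bpoly, bpolyDegree]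
  | 1 => by simp [Bpoly, bpolyDegree]
  | 2 => by simp [Bpoly, bpolyDegree]
  | i + 3 => by
    obtain ⟨hmon₁, hdeg₁⟩ := monic_Bpoly_and_natDegree_eq hk (i + 1)
    obtain ⟨-, hdeg₂⟩ := monic_Bpoly_and_natDegree_eq hk (i + 2)
    have hmon : (X ^ 2 ^ ((i + 1) * k) * Bpoly F k (i + 1)).Monic := (monic_X_pow _).mul hmon₁
    have hdeg : (X ^ 2 ^ ((i + 1) * k) * Bpoly F k (i + 1)).natDegree =
        2 ^ ((i + 1) * k) + bpolyDegree k (i + 1) := by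
      rw [(monic_X_pow _).natDegree_mul hmon₁, natDegree_X_pow, hdeg₁]
    have hlt : (Bpoly F k (i + 2)).natDegree < (X ^ 2 ^ ((i + 1) * k) * Bpoly F k (i + 1)).natDegree := by
      rw [hdeg₂, hdeg]
      exact (bpolyDegree_succ_lt hk (i + 1)).trans_le (Nat.le_add_right _ _)
    rw [Bpoly, natDegree_add_eq_right_of_natDegree_lt hlt, hdeg]
    exact ⟨hmon.add_of_right (degree_lt_degree hlt), rfl⟩

theorem natDegree_Bpoly_eq_div (hk : 1 ≤ k) {i : ℕ} (hi : 1 ≤ i) (hi₂ : i ≤ 2) (m : ℕ) :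
    (Bpoly F k (i + 2 * m)).natDegree =
      (2 ^ ((i + 2 * m) * k) - 2 ^ (i * k)) / (2 ^ (2 * k) - 1) := by
  have hsum := bpolyDegree_add_two_mul k hi m
  have hbase : bpolyDegree k i = 0 := by interval_cases i <;> rfl
  have hpos : 0 < 2 ^ (2 * k) - 1 := Nat.sub_pos_of_lt (Nat.one_lt_two_pow (by omega))
  rw [hbase, zero_mul, add_zero] at hsum
  rw [(monic_Bpoly_and_natDegree_eq hk _).2]
  exact (Nat.div_eq_of_eq_mul_left hpos (by omega)).symm

end

theorem stmt3_general (k : ℕ) (hk : 1 ≤ k)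
    (F : Type*) [Field F] :
    (∀ i : ℕ, 1 ≤ i → Odd i →
        (Bpoly F k i).natDegree = (2 ^ (i * k) - 2 ^ k) / (2 ^ (2 * k) - 1)) ∧
      (∀ i : ℕ, 2 ≤ i → Even i →
        (Bpoly F k i).natDegree = (2 ^ (i * k) - 2 ^ (2 * k)) / (2 ^ (2 * k) - 1)) := by
  constructor
  · rintro i - ⟨m, rfl⟩
    simpa [add_comm, one_mul] using natDegree_Bpoly_eq_div (F := F) hk le_rfl one_le_two m
  · rintro i hi ⟨m, rfl⟩
    obtain ⟨n, rfl⟩ : ∃ n, m = n + 1 := ⟨m - 1, by omega⟩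
    convert natDegree_Bpoly_eq_div (F := F) hk one_le_two le_rfl n using 2 <;> ring_nf

theorem stmt3 (k : ℕ) (hk : 1 ≤ k)
    (F : Type*) [Field F] [CharP F 2] :
    (∀ i : ℕ, 1 ≤ i → Odd i →
        (Bpoly F k i).natDegree = (2 ^ (i * k) - 2 ^ k) / (2 ^ (2 * k) - 1)) ∧
      (∀ i : ℕ, 2 ≤ i → Even i →
        (Bpoly F k i).natDegree = (2 ^ (i * k) - 2 ^ (2 * k)) / (2 ^ (2 * k) - 1)) :=
  stmt3_general k hk F
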